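/- Any decomposable family of itemsets can be transformed into the family consisting of all singletons (the independence model) by a finite sequence of legal split operations. Consequently, since split(S∪{x,y}, x, y) and merge(S, x, y) are mutually inverse operations, any decomposable family can be reached from any other decomposable family by a finite sequence of legal split and merge operations. -/

import Mathlib

open scoped Classical

variable {A : Type*} [Fintype A] [DecidableEq A]

/-- A family of itemsets is downward closed if it is closed under taking subsets. -/
def DownwardClosed (F : Finset (Finset A)) : Prop :=
  ∀ X ∈ F, ∀ Y ⊆ X, Y ∈ F

/-- The maximal itemsets of a family. -/
def maximalSets (F : Finset (Finset A)) : Finset (Finset A) :=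
  F.filter fun X => ∀ Y ∈ F, X ⊆ Y → X = Y

/-- A junction tree for a family `F`: a tree on the maximal itemsets of `F` such that
for any two nodes sharing an item `a`, every node on the (unique) path between them
contains `a` (running intersection property). -/
def IsJunctionTree (F : Finset (Finset A))
    (G : SimpleGraph {X // X ∈ maximalSets F}) : Prop :=
  G.IsTree ∧
    ∀ (X Y : {X // X ∈ maximalSets F}) (a : A), a ∈ X.1 → a ∈ Y.1 →
      ∀ (p : G.Walk X Y), p.IsPath → ∀ Z ∈ p.support, a ∈ Z.1

/-- A family is decomposable if it admits a junction tree. -/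
def Decomposable (F : Finset (Finset A)) : Prop :=
  ∃ G : SimpleGraph {X // X ∈ maximalSets F}, IsJunctionTree F G

/-- The collection {X − S : X ∈ max(F), S ⊊ X}. -/
def baseFam (F : Finset (Finset A)) (S : Finset A) : Finset (Finset A) :=
  ((maximalSets F).filter fun X => S ⊂ X).image fun X => X \ S

/-- The union of the connected component of `U` in the intersection graph on `baseFam F S`. -/
noncomputable def component (F : Finset (Finset A)) (S U : Finset A) : Finset A :=
  ((baseFam F S).filter fun V =>
      Relation.ReflTransGen
        (fun P Q => P ∈ baseFam F S ∧ Q ∈ baseFam F S ∧ (P ∩ Q).Nonempty) U V).sup id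

/-- The reduced family R(F;S): obtained from {X − S : X ∈ max(F), S ⊊ X} by repeatedly
replacing intersecting members by their union until all members are pairwise disjoint;
equivalently, the unions of the connected components of the intersection graph. -/
noncomputable def reducedFamily (F : Finset (Finset A)) (S : Finset A) : Set (Finset A) :=
  {Z | ∃ U ∈ baseFam F S, Z = component F S U}

/-- A legal split step: `G` is obtained from `F` by a split `split(X,x,y)` where `X` is
the unique maximal itemset of `F` containing both `x` and `y`. -/
def LegalSplitStep (F G : Finset (Finset A)) : Prop :=
  ∃ X ∈ maximalSets F, ∃ x ∈ X, ∃ y ∈ X, x ≠ y ∧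
    (∀ Y ∈ maximalSets F, x ∈ Y → y ∈ Y → Y = X) ∧
    G = F.filter fun Z => ¬(x ∈ Z ∧ y ∈ Z)

/-- A legal merge step: `G` is obtained from `F` by adding `S ∪ {x,y}` and all its
subsets, the result being decomposable. -/
def LegalMergeStep (F G : Finset (Finset A)) : Prop :=
  ∃ S : Finset A, ∃ x : A, ∃ y : A, x ∉ S ∧ y ∉ S ∧ x ≠ y ∧
    G = F ∪ (insert x (insert y S)).powerset ∧ Decomposable G

/-- The family of the independence model: the empty itemset and all singletons. -/
def indepFam (A : Type*) [Fintype A] [DecidableEq A] : Finset (Finset A) :=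
  insert ∅ (Finset.univ.image fun a : A => ({a} : Finset A))

/-!
A split `split(L, x, y)` in which `x` lies in no maximal set other than `L` preserves
decomposability. Its maximal sets are those of `F` other than `L`, together with `L - {y}` and,
unless another maximal set swallows it, `L - {x}`. In the first case the node `L` of a junction
tree is relabelled `L - {x}` and `L - {y}` is hung from it as a new leaf; in the second case `L`
is relabelled `L - {y}`, which keeps the running intersection property as long as at most one
neighbour of `L` contains `y`.

Such a split exists as soon as some maximal set is nontrivial. The junction tree has a nontrivial
node `L` with at most one nontrivial neighbour `N` (an end of a longest path through nontrivial
nodes). A neighbour meeting `L` is nontrivial, since a singleton inside `L` is not maximal, hence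
equal to `N`; so by the running intersection property each element of `L \ N` lies in no other
maximal set. Either `L \ N` has two elements `x, y`, or `L \ N = {x}`, so that
`L - {x} ⊆ N` and any other `y ∈ L` lies in no neighbour but `N`.

Each split removes `L` from the family, so iterating ends at the independence model. A legal
split between decomposable families is undone by a legal merge, which gives the second claim.
-/

namespace SimpleGraph

variable {V : Type*} {G : SimpleGraph V}

theorem IsAcyclic.exists_subsingleton_neighborSet_inter [Finite V] (hG : G.IsAcyclic)
    {s : Set V} (hs : s.Nonempty) : ∃ v ∈ s, (G.neighborSet v ∩ s).Subsingleton := by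
  have : Nonempty s := hs.to_subtype
  obtain ⟨u, _, p, hp, hlongest⟩ := Walk.exists_isPath_forall_isPath_length_le_length (G.induce s)
  -- a neighbour of `u` off the longest path `p` would extend it, so it is the second vertex of `p`
  have hsnd : ∀ w (hw : w ∈ G.neighborSet u ∩ s), (⟨w, hw.2⟩ : s) = p.snd := by
    rintro w ⟨hadj, hws⟩
    have hadj' : (G.induce s).Adj u ⟨w, hws⟩ := hadj
    refine (hG.induce s).eq_snd_of_adj_start hp hadj' (by_contra fun hw => ?_)
    have := hlongest _ _ _ (hp.cons (h := hadj'.symm) hw)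
    simp at this
  refine ⟨u, u.2, fun w hw w' hw' => ?_⟩
  simpa using (hsnd w hw).trans (hsnd w' hw').symm

theorem Walk.IsPath.exists_adj_ne_of_mem_support {u v w : V} {p : G.Walk u w} (hp : p.IsPath)
    (hv : v ∈ p.support) (hvu : v ≠ u) (hvw : v ≠ w) :
    ∃ a ∈ p.support, ∃ b ∈ p.support, G.Adj v a ∧ G.Adj v b ∧ a ≠ b := by
  classical
  set q := p.takeUntil v hv
  set r := p.dropUntil v hv
  have hq : ¬q.Nil := Walk.not_nil_of_ne hvu.symm
  have hr : ¬r.Nil := Walk.not_nil_of_ne hvw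
  have hsupp : p.support = q.support ++ r.support.tail := by
    rw [← Walk.support_append, Walk.take_spec]
  have hqa : q.penultimate ∈ q.support := q.getVert_mem_support _
  have hrb : r.snd ∈ r.support.tail := Walk.snd_mem_tail_support hr
  refine ⟨q.penultimate, ?_, r.snd, ?_, (Walk.adj_penultimate hq).symm, Walk.adj_snd hr, ?_⟩
  · rw [hsupp]; exact List.mem_append_left _ hqa
  · rw [hsupp]; exact List.mem_append_right _ hrb
  · have := hp.support_nodup
    rw [hsupp, List.nodup_append] at this
    exact this.2.2 _ hqa _ hrb

def attachLeaf (G : SimpleGraph V) (v : V) : SimpleGraph (Option V) :=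
  G.map Function.Embedding.some ⊔ edge none (some v)

def toAttachLeaf (G : SimpleGraph V) (v : V) : G →g G.attachLeaf v where
  toFun := some
  map_rel' h := Or.inl (map_adj_apply.2 h)

theorem toAttachLeaf_apply (v u : V) : G.toAttachLeaf v u = some u := rfl

theorem attachLeaf_adj_none (v : V) : (G.attachLeaf v).Adj none (some v) :=
  Or.inr (by simp [edge_adj])

theorem IsTree.attachLeaf [Finite V] (hG : G.IsTree) (v : V) : (G.attachLeaf v).IsTree := by
  rw [isTree_iff_connected_and_card] at hG ⊢
  constructor
  · have hreach : ∀ o, (G.attachLeaf v).Reachable o (some v) := by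
      rintro (_ | u)
      · exact (attachLeaf_adj_none v).reachable
      · exact (hG.1 u v).map (G.toAttachLeaf v)
    exact Connected.mk fun o o' => (hreach o).trans (hreach o').symm
  · have hleaf : s(none, some v) ∉ Function.Embedding.some.sym2Map '' G.edgeSet := by
      rintro ⟨e, -, he⟩
      induction e
      simp at he
    rw [SimpleGraph.attachLeaf, edgeSet_sup, edgeSet_map, edgeSet_edge_of_ne (by simp),
      Set.union_singleton, Nat.card_coe_set_eq, Set.ncard_insert_of_notMem hleaf,
      Set.ncard_image_of_injective _ (Function.Embedding.injective _), ← Nat.card_coe_set_eq,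
      Finite.card_option, hG.2]

end SimpleGraph

open SimpleGraph

section RunningIntersection

variable {ι κ α : Type*} {G : SimpleGraph ι} {c : ι → Finset α}

def RunningIntersection (G : SimpleGraph ι) (c : ι → Finset α) : Prop :=
  ∀ ⦃i j : ι⦄ ⦃a : α⦄, a ∈ c i → a ∈ c j → ∃ p : G.Walk i j, ∀ k ∈ p.support, a ∈ c k

theorem RunningIntersection.mem_of_isPath (h : RunningIntersection G c) (hG : G.IsAcyclic)
    {i j : ι} {a : α} (hi : a ∈ c i) (hj : a ∈ c j) {p : G.Walk i j} (hp : p.IsPath) :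
    ∀ k ∈ p.support, a ∈ c k := by
  classical
  obtain ⟨q, hq⟩ := h hi hj
  obtain rfl : p = q.bypass :=
    congrArg Subtype.val ((hG.subsingleton_path i j).elim ⟨p, hp⟩ ⟨_, q.bypass_isPath⟩)
  exact fun k hk => hq k (q.support_bypass_subset_support hk)

theorem RunningIntersection.eq_of_forall_adj_notMem (h : RunningIntersection G c) {v w : ι}
    {a : α} (hv : a ∈ c v) (hw : a ∈ c w) (hnbr : ∀ u, G.Adj v u → a ∉ c u) : w = v := by
  by_contra hwv
  obtain ⟨p, hp⟩ := h hv hw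
  have hnil : ¬p.Nil := Walk.not_nil_of_ne (Ne.symm hwv)
  exact hnbr _ (Walk.adj_snd hnil) (hp _ (List.mem_of_mem_tail (Walk.snd_mem_tail_support hnil)))

theorem RunningIntersection.of_iso {H : SimpleGraph κ} (φ : G ≃g H) {d : κ → Finset α}
    (h : RunningIntersection G (d ∘ φ)) : RunningIntersection H d := by
  intro i j a hi hj
  obtain ⟨p, hp⟩ := h (i := φ.symm i) (j := φ.symm j) (by simpa) (by simpa)
  refine ⟨(p.map φ.toHom).copy (by simp) (by simp), fun k hk => ?_⟩
  rw [Walk.support_copy, Walk.support_map, List.mem_map] at hk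
  obtain ⟨k, hk, rfl⟩ := hk
  exact hp k hk

theorem RunningIntersection.update [DecidableEq ι] (h : RunningIntersection G c)
    (hG : G.IsAcyclic) {v : ι} {C : Finset α} (hC : C ⊆ c v)
    (hnbr : ∀ a ∈ c v, a ∉ C → {u | G.Adj v u ∧ a ∈ c u}.Subsingleton) :
    RunningIntersection G (Function.update c v C) := by
  intro i j a hi hj
  by_cases hv : a ∈ c v ∧ a ∉ C
  · have hne : ∀ {k}, a ∈ Function.update c v C k → k ≠ v := by
      rintro k hk rfl
      exact hv.2 (by simpa using hk)
    have hi' : a ∈ c i := by simpa [Function.update_of_ne (hne hi)] using hi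
    have hj' : a ∈ c j := by simpa [Function.update_of_ne (hne hj)] using hj
    obtain ⟨q, -⟩ := h hi' hj'
    have hp := q.bypass_isPath
    have hpa := h.mem_of_isPath hG hi' hj' hp
    -- otherwise `v` is an interior vertex of the path, with two distinct neighbours containing `a`
    have hvp : v ∉ q.bypass.support := by
      intro hvp
      obtain ⟨x, hx, y, hy, hvx, hvy, hxy⟩ :=
        hp.exists_adj_ne_of_mem_support hvp (hne hi).symm (hne hj).symm
      exact hxy (hnbr a hv.1 hv.2 ⟨hvx, hpa x hx⟩ ⟨hvy, hpa y hy⟩)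
    refine ⟨q.bypass, fun k hk => ?_⟩
    rw [Function.update_of_ne (ne_of_mem_of_not_mem hk hvp)]
    exact hpa k hk
  · have hsame : ∀ k, a ∈ Function.update c v C k ↔ a ∈ c k := by
      intro k
      rcases eq_or_ne k v with rfl | hk
      · simp only [Function.update_self]
        exact ⟨fun h => hC h, fun h => not_not.1 (not_and.1 hv h)⟩
      · rw [Function.update_of_ne hk]
    obtain ⟨p, hp⟩ := h ((hsame i).1 hi) ((hsame j).1 hj)
    exact ⟨p, fun k hk => (hsame k).2 (hp k hk)⟩

theorem RunningIntersection.attachLeaf (h : RunningIntersection G c) (v : ι) {B : Finset α}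
    (hB : ∀ a ∈ B, a ∈ c v ∨ ∀ u, a ∉ c u) :
    RunningIntersection (G.attachLeaf v) (fun o => o.elim B c) := by
  intro i j a hi hj
  by_cases hA : ∀ u, a ∉ c u
  · have hnone : ∀ o : Option ι, a ∈ o.elim B c → o = none := by
      rintro (_ | u) hu
      · rfl
      · exact absurd hu (hA u)
    obtain rfl := hnone i hi
    obtain rfl := hnone j hj
    exact ⟨Walk.nil, by simpa using hi⟩
  · have hsome : ∀ o : Option ι, a ∈ o.elim B c → ∃ u, a ∈ c u ∧
        ∃ p : (G.attachLeaf v).Walk o (some u), ∀ k ∈ p.support, a ∈ k.elim B c := by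
      rintro (_ | u) ho
      · have hv := (hB a ho).resolve_right hA
        refine ⟨v, hv, .cons (attachLeaf_adj_none v) .nil, ?_⟩
        simpa [hv] using ho
      · exact ⟨u, ho, .nil, by simpa using ho⟩
    obtain ⟨u, hu, p, hp⟩ := hsome i hi
    obtain ⟨w, hw, q, hq⟩ := hsome j hj
    obtain ⟨r, hr⟩ := h hu hw
    obtain ⟨r', hr'⟩ : ∃ r' : (G.attachLeaf v).Walk (some u) (some w),
        ∀ k ∈ r'.support, a ∈ k.elim B c := by
      refine ⟨(r.map (G.toAttachLeaf v)).copy (toAttachLeaf_apply v u) (toAttachLeaf_apply v w),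
        fun k hk => ?_⟩
      rw [Walk.support_copy, Walk.support_map, List.mem_map] at hk
      obtain ⟨k, hk, rfl⟩ := hk
      exact hr k hk
    refine ⟨p.append (r'.append q.reverse), fun k hk => ?_⟩
    rw [Walk.mem_support_append_iff, Walk.mem_support_append_iff, Walk.support_reverse,
      List.mem_reverse] at hk
    rcases hk with hk | hk | hk
    · exact hp k hk
    · exact hr' k hk
    · exact hq k hk

end RunningIntersection

section SplitFamily

variable {α : Type*} [DecidableEq α] {F : Finset (Finset α)} {x y : α} {L Z : Finset α}

def splitFamily (F : Finset (Finset α)) (x y : α) : Finset (Finset α) :=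
  F.filter fun Z => ¬(x ∈ Z ∧ y ∈ Z)

theorem mem_splitFamily : Z ∈ splitFamily F x y ↔ Z ∈ F ∧ ¬(x ∈ Z ∧ y ∈ Z) :=
  Finset.mem_filter

theorem splitFamily_comm (F : Finset (Finset α)) (x y : α) :
    splitFamily F x y = splitFamily F y x := by
  ext Z
  simp only [mem_splitFamily, and_comm (a := x ∈ Z)]

theorem DownwardClosed.splitFamily (hF : DownwardClosed F) :
    DownwardClosed (splitFamily F x y) := fun X hX Y hYX =>
  mem_splitFamily.2 ⟨hF X (mem_splitFamily.1 hX).1 Y hYX,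
    fun h => (mem_splitFamily.1 hX).2 ⟨hYX h.1, hYX h.2⟩⟩

theorem erase_mem_splitFamily (hF : DownwardClosed F) (hL : L ∈ F) :
    L.erase y ∈ splitFamily F x y :=
  mem_splitFamily.2 ⟨hF L hL _ (Finset.erase_subset y L), fun h => Finset.notMem_erase y L h.2⟩

theorem singleton_mem_splitFamily {a : α} (ha : {a} ∈ F) (hxy : x ≠ y) :
    {a} ∈ splitFamily F x y :=
  mem_splitFamily.2 ⟨ha, fun ⟨hx, hy⟩ =>
    hxy ((Finset.mem_singleton.1 hx).trans (Finset.mem_singleton.1 hy).symm)⟩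

end SplitFamily

section Relabel

variable {β : Type*} {p : β → Prop} [DecidableEq (Subtype p)]

theorem exists_update_val_eq_iff (v : Subtype p) (C X : β) :
    (∃ k, Function.update (Subtype.val : Subtype p → β) v C k = X) ↔ X = C ∨ (p X ∧ X ≠ v.1) := by
  constructor
  · rintro ⟨k, rfl⟩
    rcases eq_or_ne k v with rfl | hk
    · exact Or.inl (Function.update_self _ _ _)
    · rw [Function.update_of_ne hk]
      exact Or.inr ⟨k.2, fun h => hk (Subtype.ext h)⟩
  · rintro (rfl | ⟨hX, hXv⟩)
    · exact ⟨v, Function.update_self _ _ _⟩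
    · exact ⟨⟨X, hX⟩, Function.update_of_ne (fun h => hXv (congrArg Subtype.val h)) _ _⟩

theorem injective_update_val (v : Subtype p) {C : β} (hC : ∀ k : Subtype p, k ≠ v → k.1 ≠ C) :
    Function.Injective (Function.update (Subtype.val : Subtype p → β) v C) := by
  intro i j hij
  by_cases hi : i = v <;> by_cases hj : j = v
  · exact hi.trans hj.symm
  · subst hi
    rw [Function.update_self, Function.update_of_ne hj] at hij
    exact absurd hij.symm (hC j hj)
  · subst hj
    rw [Function.update_self, Function.update_of_ne hi] at hij
    exact absurd hij (hC i hi)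
  · rw [Function.update_of_ne hi, Function.update_of_ne hj] at hij
    exact Subtype.ext hij

end Relabel

section MaximalSets

variable {F : Finset (Finset A)} {L W X Z : Finset A}

theorem mem_maximalSets : X ∈ maximalSets F ↔ X ∈ F ∧ ∀ Y ∈ F, X ⊆ Y → X = Y :=
  Finset.mem_filter

theorem maximalSets_subset : maximalSets F ⊆ F :=
  Finset.filter_subset _ _

theorem exists_mem_maximalSets_superset (hZ : Z ∈ F) : ∃ W ∈ maximalSets F, Z ⊆ W := by
  obtain ⟨W, hZW, hW⟩ := F.exists_le_maximal hZ
  exact ⟨W, mem_maximalSets.2 ⟨hW.prop, fun Y hY hWY => hW.eq_of_le hY hWY⟩, hZW⟩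

theorem not_subset_of_mem_maximalSets (hW : W ∈ maximalSets F) (hL : L ∈ F) (hWL : W ≠ L) :
    ¬W ⊆ L :=
  fun h => hWL ((mem_maximalSets.1 hW).2 L hL h)

theorem ne_erase_of_mem_maximalSets (hW : W ∈ maximalSets F) (hL : L ∈ F) (hWL : W ≠ L)
    (z : A) : W ≠ L.erase z :=
  fun h => not_subset_of_mem_maximalSets hW hL hWL (h ▸ Finset.erase_subset z L)

theorem nontrivial_of_mem_maximalSets (hW : W ∈ maximalSets F) (hL : L ∈ F) (hWL : W ≠ L)
    {a : A} (haW : a ∈ W) (haL : a ∈ L) : W.Nontrivial := by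
  by_contra h
  refine not_subset_of_mem_maximalSets hW hL hWL fun b hb => ?_
  rwa [Set.not_nontrivial_iff.1 h hb haW]

theorem Decomposable.nonempty (hF : Decomposable F) : F.Nonempty := by
  obtain ⟨T, hT⟩ := hF
  obtain ⟨W⟩ := hT.1.connected.nonempty
  exact ⟨W.1, maximalSets_subset W.2⟩

theorem isJunctionTree_iff {T : SimpleGraph {X // X ∈ maximalSets F}} :
    IsJunctionTree F T ↔ T.IsTree ∧ RunningIntersection T Subtype.val := by
  refine ⟨fun h => ⟨h.1, fun X Y a hX hY => ?_⟩,
    fun h => ⟨h.1, fun X Y a hX hY p hp => h.2.mem_of_isPath h.1.isAcyclic hX hY hp⟩⟩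
  obtain ⟨p, hp⟩ := (h.1.connected.preconnected X Y).exists_isPath
  exact ⟨p, h.2 X Y a hX hY p hp⟩

theorem decomposable_of_runningIntersection {ι : Type*} {H : SimpleGraph ι} (hH : H.IsTree)
    {c : ι → Finset A} (hc : RunningIntersection H c) (hinj : Function.Injective c)
    (hrange : ∀ X, X ∈ maximalSets F ↔ ∃ i, c i = X) : Decomposable F := by
  let e : ι ≃ {X // X ∈ maximalSets F} :=
    Equiv.ofBijective (fun i => ⟨c i, (hrange _).2 ⟨i, rfl⟩⟩)
      ⟨fun i j h => hinj (congrArg Subtype.val h),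
        fun X => ((hrange X).1 X.2).imp fun i hi => Subtype.ext hi⟩
  exact ⟨H.map e, isJunctionTree_iff.2 ⟨(Iso.map e H).isTree_iff.1 hH,
    RunningIntersection.of_iso (d := Subtype.val) (Iso.map e H) hc⟩⟩

end MaximalSets

section Split

variable {F : Finset (Finset A)} {L N W X : Finset A} {x y : A}

theorem erase_mem_maximalSets_splitFamily (hdc : DownwardClosed F) (hL : L ∈ maximalSets F)
    (hx : x ∈ L) (hxy : x ≠ y) (hxL : ∀ W ∈ maximalSets F, x ∈ W → W = L) :
    L.erase y ∈ maximalSets (splitFamily F x y) := by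
  refine mem_maximalSets.2 ⟨erase_mem_splitFamily hdc (maximalSets_subset hL), fun Z hZ hLZ => ?_⟩
  obtain ⟨hZF, hZxy⟩ := mem_splitFamily.1 hZ
  have hxZ : x ∈ Z := hLZ (Finset.mem_erase.2 ⟨hxy, hx⟩)
  obtain ⟨W, hW, hZW⟩ := exists_mem_maximalSets_superset hZF
  obtain rfl := hxL W hW (hZW hxZ)
  exact hLZ.antisymm fun a ha =>
    Finset.mem_erase.2 ⟨fun hay => hZxy ⟨hxZ, hay ▸ ha⟩, hZW ha⟩

theorem mem_maximalSets_splitFamily_of_ne (hxL : ∀ W ∈ maximalSets F, x ∈ W → W = L)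
    (hW : W ∈ maximalSets F) (hWL : W ≠ L) : W ∈ maximalSets (splitFamily F x y) :=
  mem_maximalSets.2 ⟨mem_splitFamily.2 ⟨maximalSets_subset hW, fun h => hWL (hxL W hW h.1)⟩,
    fun Z hZ => (mem_maximalSets.1 hW).2 Z (mem_splitFamily.1 hZ).1⟩

theorem eq_erase_or_mem_of_mem_maximalSets_splitFamily (hdc : DownwardClosed F)
    (hL : L ∈ maximalSets F) (hxL : ∀ W ∈ maximalSets F, x ∈ W → W = L)
    (hX : X ∈ maximalSets (splitFamily F x y)) :
    X = L.erase x ∨ X = L.erase y ∨ (X ∈ maximalSets F ∧ X ≠ L) := by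
  obtain ⟨hXs, hXmax⟩ := mem_maximalSets.1 hX
  obtain ⟨hXF, hXxy⟩ := mem_splitFamily.1 hXs
  obtain ⟨W, hW, hXW⟩ := exists_mem_maximalSets_superset hXF
  by_cases hWL : W = L
  · subst hWL
    have hsub : ∀ z ∉ X, X ⊆ W.erase z := fun z hz a ha =>
      Finset.mem_erase.2 ⟨fun h => hz (h ▸ ha), hXW ha⟩
    have hWF := maximalSets_subset hL
    rcases not_and_or.1 hXxy with hx | hy
    · refine Or.inl (hXmax _ ?_ (hsub x hx))
      rw [splitFamily_comm]
      exact erase_mem_splitFamily hdc hWF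
    · exact Or.inr (Or.inl (hXmax _ (erase_mem_splitFamily hdc hWF) (hsub y hy)))
  · obtain rfl := hXmax W (maximalSets_subset (mem_maximalSets_splitFamily_of_ne hxL hW hWL)) hXW
    exact Or.inr (Or.inr ⟨hW, hWL⟩)

theorem mem_maximalSets_splitFamily_iff_of_private (hdc : DownwardClosed F)
    (hL : L ∈ maximalSets F) (hx : x ∈ L) (hy : y ∈ L) (hxy : x ≠ y)
    (hxL : ∀ W ∈ maximalSets F, x ∈ W → W = L) (hyL : ∀ W ∈ maximalSets F, y ∈ W → W = L) :
    X ∈ maximalSets (splitFamily F x y) ↔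
      X = L.erase y ∨ X = L.erase x ∨ (X ∈ maximalSets F ∧ X ≠ L) := by
  constructor
  · intro hX
    rcases eq_erase_or_mem_of_mem_maximalSets_splitFamily hdc hL hxL hX with h | h | h
    · exact Or.inr (Or.inl h)
    · exact Or.inl h
    · exact Or.inr (Or.inr h)
  · rintro (rfl | rfl | ⟨hX, hXL⟩)
    · exact erase_mem_maximalSets_splitFamily hdc hL hx hxy hxL
    · rw [splitFamily_comm]
      exact erase_mem_maximalSets_splitFamily hdc hL hy hxy.symm hyL
    · exact mem_maximalSets_splitFamily_of_ne hxL hX hXL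

theorem mem_maximalSets_splitFamily_iff_of_erase_subset (hdc : DownwardClosed F)
    (hL : L ∈ maximalSets F) (hx : x ∈ L) (hxy : x ≠ y)
    (hxL : ∀ W ∈ maximalSets F, x ∈ W → W = L) (hN : N ∈ maximalSets F) (hNL : N ≠ L)
    (hLN : L.erase x ⊆ N) :
    X ∈ maximalSets (splitFamily F x y) ↔ X = L.erase y ∨ (X ∈ maximalSets F ∧ X ≠ L) := by
  constructor
  · intro hX
    rcases eq_erase_or_mem_of_mem_maximalSets_splitFamily hdc hL hxL hX with rfl | h | h
    · -- `L.erase x` is swallowed by `N`, which survives the split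
      have hNs := mem_maximalSets_splitFamily_of_ne (y := y) hxL hN hNL
      have hxN := (mem_maximalSets.1 hX).2 N (maximalSets_subset hNs) hLN
      exact absurd (hxN ▸ Finset.erase_subset x L)
        (not_subset_of_mem_maximalSets hN (maximalSets_subset hL) hNL)
    · exact Or.inl h
    · exact Or.inr h
  · rintro (rfl | ⟨hX, hXL⟩)
    · exact erase_mem_maximalSets_splitFamily hdc hL hx hxy hxL
    · exact mem_maximalSets_splitFamily_of_ne hxL hX hXL

theorem decomposable_splitFamily_of_private (hdc : DownwardClosed F)
    {T : SimpleGraph {X // X ∈ maximalSets F}} (hT : IsJunctionTree F T)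
    (hL : L ∈ maximalSets F) (hx : x ∈ L) (hy : y ∈ L) (hxy : x ≠ y)
    (hxL : ∀ W ∈ maximalSets F, x ∈ W → W = L) (hyL : ∀ W ∈ maximalSets F, y ∈ W → W = L) :
    Decomposable (splitFamily F x y) := by
  obtain ⟨hTtree, hTri⟩ := isJunctionTree_iff.1 hT
  set v : {X // X ∈ maximalSets F} := ⟨L, hL⟩
  have hxv : ∀ u : {X // X ∈ maximalSets F}, x ∈ u.1 → u = v :=
    fun u hu => Subtype.ext (hxL u.1 u.2 hu)
  set c := Function.update (Subtype.val : {X // X ∈ maximalSets F} → Finset A) v (L.erase x)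
  have hc : ∀ u, u ≠ v → u.1 ≠ L.erase x ∧ u.1 ≠ L.erase y := fun u hu =>
    have huL : u.1 ≠ L := fun h => hu (Subtype.ext h)
    have hLF := maximalSets_subset hL
    ⟨ne_erase_of_mem_maximalSets u.2 hLF huL x, ne_erase_of_mem_maximalSets u.2 hLF huL y⟩
  refine decomposable_of_runningIntersection (hTtree.attachLeaf v)
    (c := fun o => o.elim (L.erase y) c) ?_ ?_ fun X => ?_
  · refine (hTri.update hTtree.isAcyclic (Finset.erase_subset x L) ?_).attachLeaf v ?_
    · intro a ha hax u hu
      obtain rfl : a = x := by_contra fun h => hax (Finset.mem_erase.2 ⟨h, ha⟩)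
      exact absurd (hxv u hu.2) hu.1.ne'
    · intro a ha
      by_cases hax : a = x
      · subst hax
        refine Or.inr fun u hu => ?_
        rcases eq_or_ne u v with rfl | huv
        · simp at hu
        · rw [Function.update_of_ne huv] at hu
          exact huv (hxv u hu)
      · left
        simpa [c, hax] using (Finset.mem_erase.1 ha).2
  · have hleaf : ∀ u, L.erase y ≠ c u := by
      intro u
      rcases eq_or_ne u v with rfl | huv
      · simpa [c] using fun h : L.erase y = L.erase x =>
          Finset.notMem_erase x L (h ▸ Finset.mem_erase.2 ⟨hxy, hx⟩)
      · simpa [c, Function.update_of_ne huv] using (hc u huv).2.symm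
    have hinj := injective_update_val v fun u hu => (hc u hu).1
    rintro (_ | i) (_ | j) hij
    · rfl
    · exact absurd hij (hleaf j)
    · exact absurd hij.symm (hleaf i)
    · exact congrArg some (hinj hij)
  · rw [mem_maximalSets_splitFamily_iff_of_private hdc hL hx hy hxy hxL hyL, Option.exists]
    simp only [Option.elim, c, exists_update_val_eq_iff, eq_comm (a := L.erase y)]
    rfl

theorem decomposable_splitFamily_of_erase_subset (hdc : DownwardClosed F)
    {T : SimpleGraph {X // X ∈ maximalSets F}} (hT : IsJunctionTree F T)
    (hL : L ∈ maximalSets F) (hx : x ∈ L) (hxy : x ≠ y)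
    (hxL : ∀ W ∈ maximalSets F, x ∈ W → W = L) (hN : N ∈ maximalSets F) (hNL : N ≠ L)
    (hLN : L.erase x ⊆ N) (hyT : {u | T.Adj ⟨L, hL⟩ u ∧ y ∈ u.1}.Subsingleton) :
    Decomposable (splitFamily F x y) := by
  obtain ⟨hTtree, hTri⟩ := isJunctionTree_iff.1 hT
  refine decomposable_of_runningIntersection hTtree
    (c := Function.update Subtype.val ⟨L, hL⟩ (L.erase y)) ?_ ?_ fun X => ?_
  · refine hTri.update hTtree.isAcyclic (Finset.erase_subset y L) fun a ha hay => ?_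
    obtain rfl : a = y := by_contra fun h => hay (Finset.mem_erase.2 ⟨h, ha⟩)
    exact hyT
  · exact injective_update_val _ fun u hu =>
      ne_erase_of_mem_maximalSets u.2 (maximalSets_subset hL) (fun h => hu (Subtype.ext h)) y
  · rw [exists_update_val_eq_iff,
      mem_maximalSets_splitFamily_iff_of_erase_subset hdc hL hx hxy hxL hN hNL hLN]

theorem IsJunctionTree.eq_of_forall_adj_notMem {T : SimpleGraph {X // X ∈ maximalSets F}}
    (hT : IsJunctionTree F T) (hL : L ∈ maximalSets F) {a : A} (ha : a ∈ L)
    (hnbr : ∀ u, T.Adj ⟨L, hL⟩ u → a ∉ u.1) : ∀ W ∈ maximalSets F, a ∈ W → W = L :=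
  fun W hW haW => congrArg Subtype.val ((isJunctionTree_iff.1 hT).2.eq_of_forall_adj_notMem
    (v := ⟨L, hL⟩) (w := ⟨W, hW⟩) ha haW hnbr)

theorem legalSplitStep_splitFamily (hL : L ∈ maximalSets F) (hx : x ∈ L) (hy : y ∈ L)
    (hxy : x ≠ y) (hxL : ∀ W ∈ maximalSets F, x ∈ W → W = L) :
    LegalSplitStep F (splitFamily F x y) :=
  ⟨L, hL, x, hx, y, hy, hxy, fun W hW hxW _ => hxL W hW hxW, rfl⟩

theorem IsJunctionTree.exists_legalSplitStep_of_adj (hdc : DownwardClosed F)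
    {T : SimpleGraph {X // X ∈ maximalSets F}} (hT : IsJunctionTree F T)
    (hL : L ∈ maximalSets F) (hLnt : L.Nontrivial) {N : {X // X ∈ maximalSets F}}
    (hLN : T.Adj ⟨L, hL⟩ N) (hmeet : ∀ u, T.Adj ⟨L, hL⟩ u → ∀ a ∈ L, a ∈ u.1 → u = N) :
    ∃ G, LegalSplitStep F G ∧ Decomposable G := by
  have hpriv : ∀ a ∈ L, a ∉ N.1 → ∀ W ∈ maximalSets F, a ∈ W → W = L := fun a ha haN =>
    hT.eq_of_forall_adj_notMem hL ha fun u hu hau => haN (hmeet u hu a ha hau ▸ hau)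
  have hNL : N.1 ≠ L := fun h => hLN.ne' (Subtype.ext h)
  by_cases hLN2 : (L \ N.1).Nontrivial
  · obtain ⟨x, hx, y, hy, hxy⟩ := hLN2
    rw [Finset.mem_coe, Finset.mem_sdiff] at hx hy
    exact ⟨_, legalSplitStep_splitFamily hL hx.1 hy.1 hxy (hpriv x hx.1 hx.2),
      decomposable_splitFamily_of_private hdc hT hL hx.1 hy.1 hxy (hpriv x hx.1 hx.2)
        (hpriv y hy.1 hy.2)⟩
  · obtain ⟨x, hx⟩ := Finset.sdiff_nonempty.2
      (not_subset_of_mem_maximalSets hL (maximalSets_subset N.2) hNL.symm)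
    have hLxN : L.erase x ⊆ N.1 := fun a ha => by
      by_contra haN
      obtain ⟨hax, haL⟩ := Finset.mem_erase.1 ha
      exact hax (Set.not_nontrivial_iff.1 hLN2 (Finset.mem_sdiff.2 ⟨haL, haN⟩) hx)
    rw [Finset.mem_sdiff] at hx
    obtain ⟨y, hy, hyx⟩ := hLnt.exists_ne x
    exact ⟨_, legalSplitStep_splitFamily hL hx.1 hy hyx.symm (hpriv x hx.1 hx.2),
      decomposable_splitFamily_of_erase_subset hdc hT hL hx.1 hyx.symm (hpriv x hx.1 hx.2)
        N.2 hNL hLxN fun u hu w hw => (hmeet u hu.1 y hy hu.2).trans (hmeet w hw.1 y hy hw.2).symm⟩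

theorem Decomposable.exists_legalSplitStep (hdc : DownwardClosed F) (hF : Decomposable F)
    (hbig : ∃ L ∈ maximalSets F, L.Nontrivial) : ∃ G, LegalSplitStep F G ∧ Decomposable G := by
  obtain ⟨T, hT⟩ := hF
  obtain ⟨L₀, hL₀, hL₀nt⟩ := hbig
  obtain ⟨⟨L, hL⟩, hLnt, hnbr⟩ := hT.1.isAcyclic.exists_subsingleton_neighborSet_inter
    (s := {u | u.1.Nontrivial}) ⟨⟨L₀, hL₀⟩, hL₀nt⟩
  replace hLnt : L.Nontrivial := hLnt
  have hmeet : ∀ u, T.Adj ⟨L, hL⟩ u → ∀ a ∈ L, a ∈ u.1 → u.1.Nontrivial := fun u hu a ha hau =>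
    nontrivial_of_mem_maximalSets u.2 (maximalSets_subset hL) (fun h => hu.ne' (Subtype.ext h))
      hau ha
  by_cases hN : ∃ N, T.Adj ⟨L, hL⟩ N ∧ N.1.Nontrivial
  · obtain ⟨N, hLN, hNnt⟩ := hN
    exact hT.exists_legalSplitStep_of_adj hdc hL hLnt hLN fun u hu a ha hau =>
      hnbr ⟨hu, hmeet u hu a ha hau⟩ ⟨hLN, hNnt⟩
  · have hpriv : ∀ a ∈ L, ∀ W ∈ maximalSets F, a ∈ W → W = L := fun a ha =>
      hT.eq_of_forall_adj_notMem hL ha fun u hu hau => hN ⟨u, hu, hmeet u hu a ha hau⟩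
    obtain ⟨x, hx, y, hy, hxy⟩ := hLnt
    exact ⟨_, legalSplitStep_splitFamily hL hx hy hxy (hpriv x hx),
      decomposable_splitFamily_of_private hdc hT hL hx hy hxy (hpriv x hx) (hpriv y hy)⟩

theorem LegalSplitStep.card_lt {G : Finset (Finset A)} (h : LegalSplitStep F G) :
    G.card < F.card := by
  obtain ⟨X, hX, x, hx, y, hy, -, -, rfl⟩ := h
  exact Finset.card_lt_card (Finset.filter_ssubset.2 ⟨X, maximalSets_subset hX, not_not.2 ⟨hx, hy⟩⟩)

theorem LegalSplitStep.legalMergeStep {G : Finset (Finset A)} (hdc : DownwardClosed F)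
    (hF : Decomposable F) (h : LegalSplitStep F G) : LegalMergeStep G F := by
  obtain ⟨X, hX, x, hx, y, hy, hxy, hXxy, rfl⟩ := h
  refine ⟨(X.erase x).erase y, x, y, by simp, Finset.notMem_erase y _, hxy, ?_, hF⟩
  rw [Finset.insert_erase (Finset.mem_erase.2 ⟨hxy.symm, hy⟩), Finset.insert_erase hx]
  ext Z
  simp only [Finset.mem_union, Finset.mem_filter, Finset.mem_powerset]
  constructor
  · intro hZ
    by_cases hZxy : x ∈ Z ∧ y ∈ Z
    · obtain ⟨W, hW, hZW⟩ := exists_mem_maximalSets_superset hZ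
      exact Or.inr (hXxy W hW (hZW hZxy.1) (hZW hZxy.2) ▸ hZW)
    · exact Or.inl ⟨hZ, hZxy⟩
  · rintro (hZ | hZ)
    · exact hZ.1
    · exact hdc X (maximalSets_subset hX) Z hZ

end Split

structure IsDecomposableModel (F : Finset (Finset A)) : Prop where
  downwardClosed : DownwardClosed F
  decomposable : Decomposable F
  singleton_mem : ∀ a : A, {a} ∈ F

theorem mem_indepFam {Z : Finset A} : Z ∈ indepFam A ↔ (Z : Set A).Subsingleton := by
  simp [indepFam, Set.subsingleton_iff_eq_empty_or_singleton, eq_comm (b := Z)]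

namespace IsDecomposableModel

theorem exists_nontrivial_of_ne_indepFam {F : Finset (Finset A)} (hF : IsDecomposableModel F)
    (hne : F ≠ indepFam A) : ∃ L ∈ maximalSets F, L.Nontrivial := by
  by_contra hsmall
  refine hne (Finset.ext fun Z => ⟨fun hZ => ?_, fun hZ => ?_⟩)
  · obtain ⟨W, hW, hZW⟩ := exists_mem_maximalSets_superset hZ
    exact mem_indepFam.2 ((Set.not_nontrivial_iff.1 fun hWnt => hsmall ⟨W, hW, hWnt⟩).anti hZW)
  · rcases (mem_indepFam.1 hZ).eq_empty_or_singleton with hZ | ⟨a, hZ⟩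
    · obtain ⟨W, hW⟩ := hF.decomposable.nonempty
      exact hF.downwardClosed W hW Z (by simp [Finset.coe_eq_empty.1 hZ])
    · rw [Finset.coe_eq_singleton.1 hZ]
      exact hF.singleton_mem a

theorem of_legalSplitStep {F G : Finset (Finset A)} (hF : IsDecomposableModel F)
    (h : LegalSplitStep F G) (hG : Decomposable G) : IsDecomposableModel G := by
  obtain ⟨-, -, x, -, y, -, hxy, -, rfl⟩ := h
  exact ⟨hF.downwardClosed.splitFamily, hG,
    fun a => singleton_mem_splitFamily (hF.singleton_mem a) hxy⟩

theorem reflTransGen_indepFam {F : Finset (Finset A)} (hF : IsDecomposableModel F) :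
    Relation.ReflTransGen (fun G H => IsDecomposableModel G ∧ LegalSplitStep G H) F
      (indepFam A) := by
  by_cases hne : F = indepFam A
  · rw [hne]
  · obtain ⟨G, hFG, hG⟩ := hF.decomposable.exists_legalSplitStep hF.downwardClosed
      (hF.exists_nontrivial_of_ne_indepFam hne)
    have := hFG.card_lt
    exact .head ⟨hF, hFG⟩ (hF.of_legalSplitStep hFG hG).reflTransGen_indepFam
termination_by F.card

end IsDecomposableModel

/-- Theorem (ergodicity): any decomposable family can be transformed to the family of all
singletons (the independence model) by a finite sequence of legal splits; consequently any
decomposable family can be reached from any other by a finite sequence of legal splits and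
merges. -/
theorem reachability (F : Finset (Finset A)) (hdc : DownwardClosed F) (hF : Decomposable F)
    (hsing : ∀ a : A, {a} ∈ F) :
    Relation.ReflTransGen LegalSplitStep F (indepFam A) ∧
    ∀ F' : Finset (Finset A), DownwardClosed F' → Decomposable F' → (∀ a : A, {a} ∈ F') →
      Relation.ReflTransGen (fun G H => LegalSplitStep G H ∨ LegalMergeStep G H) F F' := by
  have toIndep := IsDecomposableModel.reflTransGen_indepFam ⟨hdc, hF, hsing⟩
  refine ⟨Relation.ReflTransGen.mono (fun _ _ h => h.2) _ _ toIndep, fun F' hdc' hF' hsing' => ?_⟩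
  have fromIndep : Relation.ReflTransGen LegalMergeStep (indepFam A) F' :=
    Relation.ReflTransGen.mono (fun _ _ h => h.2.legalMergeStep h.1.downwardClosed h.1.decomposable)
      _ _ (Relation.reflTransGen_swap.2
        (IsDecomposableModel.reflTransGen_indepFam ⟨hdc', hF', hsing'⟩))
  exact (Relation.ReflTransGen.mono (fun _ _ h => Or.inl h.2) _ _ toIndep).trans
    (Relation.ReflTransGen.mono (fun _ _ h => Or.inr h) _ _ fromIndep)
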